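/- arXiv:0704.2919 — 2 statements merged into one kernel-verified Lean document; each statement's English description precedes it below -/
import Mathlib

section
/- Let F be a ∪-closed family with base B. Then F is well-graded if and only if for any two distinct sets K and L in B there is a tight path in F from K to K ∪ L. -/
open Finset

variable {α : Type*} [DecidableEq α]

/-- The span of a family `G`: all unions of nonempty subfamilies of `G`. -/
def Span (G : Finset (Finset α)) : Finset (Finset α) :=
  (G.powerset.filter Finset.Nonempty).image fun H => H.sup id

/-- A family is ∪-closed if it contains the union of each of its nonempty subfamilies. -/
def UnionClosed (F : Finset (Finset α)) : Prop :=
  ∀ H ⊆ F, H.Nonempty → H.sup id ∈ F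

/-- `p` is a tight path from `P` to `Q` inside the family `F`. -/
def IsTightPath (F : Finset (Finset α)) (P Q : Finset α) (p : List (Finset α)) : Prop :=
  p.head? = some P ∧ p.getLast? = some Q ∧
  p.length = (symmDiff P Q).card + 1 ∧
  (∀ S ∈ p, S ∈ F) ∧
  List.Chain' (fun A B => (symmDiff A B).card = 1) p

/-- A family is well-graded if any two distinct members are joined by a tight path. -/
def WellGraded (F : Finset (Finset α)) : Prop :=
  ∀ P ∈ F, ∀ Q ∈ F, P ≠ Q → ∃ p, IsTightPath F P Q p

/-- `B` is a base of `F`: a minimal subfamily of `F` spanning `F`. -/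
def IsBase (B F : Finset (Finset α)) : Prop :=
  B ⊆ F ∧ Span B = F ∧ ∀ H ⊆ B, Span H = F → H = B

/-- `A` is an atom of `F` at `x`: an inclusion-minimal member of `F` containing `x`. -/
def IsAtomAt (F : Finset (Finset α)) (x : α) (A : Finset α) : Prop :=
  A ∈ F ∧ x ∈ A ∧ ∀ B ∈ F, x ∈ B → B ⊆ A → B = A

/-- `A` is an atom of `F`: either the empty set (if it is in `F`) or an atom at some point. -/
def IsAtomOf (F : Finset (Finset α)) (A : Finset α) : Prop :=
  (A = ∅ ∧ A ∈ F) ∨ ∃ x, IsAtomAt F x A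

/-- The surmise function: the collection of atoms of `F` at `x`. -/
def surmise (F : Finset (Finset α)) (x : α) : Finset (Finset α) :=
  F.filter fun A => x ∈ A ∧ ∀ B ∈ F, x ∈ B → B ⊆ A → B = A

/-- `{σ(x) : x ∈ ∪F}` forms a partition of `B \ {∅}`. -/
def SurmisePartition (F B : Finset (Finset α)) : Prop :=
  (∀ x ∈ F.sup id, ∀ y ∈ F.sup id,
      surmise F x = surmise F y ∨ Disjoint (surmise F x) (surmise F y)) ∧
  (F.sup id).sup (surmise F) = B.erase ∅

/-- The endpoints of `X` in the family `B`: elements of `X` lying in no proper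
subset of `X` belonging to `B`. -/
def endpoints (B : Finset (Finset α)) (X : Finset α) : Finset α :=
  X \ (B.filter fun Y => Y ⊂ X).sup id

/-- A family is discriminative if points contained in the same members are equal. -/
def Discriminative (F : Finset (Finset α)) : Prop :=
  ∀ u ∈ F.sup id, ∀ v ∈ F.sup id, (∀ S ∈ F, (u ∈ S ↔ v ∈ S)) → u = v

/-! Joining a fixed member `A` of `F` to every set along a tight path from `K` to `Q`, and
dropping the steps that toggle an element of `A`, gives a tight path from `A ∪ K` to `A ∪ Q`.
So if `P ∈ F` and `L ∈ B`, a base set `K ≠ L` below `P` turns the path from `K` to `K ∪ L`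
into one from `P` to `P ∪ L`. Adding the base sets whose union is `Q` one at a time gives a
tight path from `P` to `P ∪ Q`, since along increasing sets distances add up; reversing the
path from `Q` to `Q ∪ P` and appending it gives a tight path from `P` to `Q`, because
`|P △ Q| = |P △ (P ∪ Q)| + |(P ∪ Q) △ Q|`. -/

open scoped symmDiff

lemma UnionClosed.union_mem {F : Finset (Finset α)} (hF : UnionClosed F) {A K : Finset α}
    (hA : A ∈ F) (hK : K ∈ F) : A ∪ K ∈ F := by
  simpa using hF {A, K} (insert_subset_iff.2 ⟨hA, singleton_subset_iff.2 hK⟩) (insert_nonempty _ _)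

lemma mem_span {B : Finset (Finset α)} {P : Finset α} :
    P ∈ Span B ↔ ∃ H ⊆ B, H.Nonempty ∧ H.sup id = P := by
  simp [Span, and_assoc]

lemma card_symmDiff_le_add (A B C : Finset α) : #(A ∆ C) ≤ #(A ∆ B) + #(B ∆ C) :=
  (card_le_card (symmDiff_triangle A B C)).trans (card_union_le _ _)

lemma card_symmDiff_eq_add_of_subset {P R S : Finset α} (hPR : P ⊆ R) (hRS : R ⊆ S) :
    #(P ∆ S) = #(P ∆ R) + #(R ∆ S) := by
  rw [symmDiff_of_le (hPR.trans hRS), symmDiff_of_le hPR, symmDiff_of_le hRS,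
    card_sdiff_of_subset (hPR.trans hRS), card_sdiff_of_subset hPR, card_sdiff_of_subset hRS]
  have := card_le_card hPR
  have := card_le_card hRS
  omega

lemma card_symmDiff_eq_add_union (P Q : Finset α) :
    #(P ∆ Q) = #(P ∆ (P ∪ Q)) + #((P ∪ Q) ∆ Q) := by
  rw [symmDiff_of_le (subset_union_left : P ⊆ P ∪ Q),
    symmDiff_of_ge (subset_union_right : Q ⊆ P ∪ Q), union_sdiff_left, union_sdiff_right,
    symmDiff_def, sup_eq_union, card_union_of_disjoint disjoint_sdiff_sdiff, add_comm]

lemma symmDiff_union_union_left (A K Q : Finset α) : (A ∪ K) ∆ (A ∪ Q) = K ∆ Q \ A := by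
  ext y
  simp only [mem_symmDiff, mem_sdiff, mem_union]
  tauto

lemma symmDiff_eq_insert_of_card_symmDiff {K R Q : Finset α} {x : α} (hKR : K ∆ R = {x})
    (h : #(K ∆ Q) = #(R ∆ Q) + 1) : x ∉ R ∆ Q ∧ K ∆ Q = insert x (R ∆ Q) := by
  have e : K ∆ Q = {x} ∆ (R ∆ Q) := by rw [← hKR, symmDiff_assoc, symmDiff_symmDiff_cancel_left]
  have hx : x ∉ R ∆ Q := by
    intro hx
    rw [e, symmDiff_of_le (singleton_subset_iff.2 hx), sdiff_singleton_eq_erase,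
      card_erase_of_mem hx] at h
    have := card_pos.2 ⟨x, hx⟩
    omega
  rw [e, (disjoint_singleton_left.2 hx).symmDiff_eq_sup, insert_eq]
  exact ⟨hx, rfl⟩

lemma card_symmDiff_add_one_le_length {P Q : Finset α} {p : List (Finset α)}
    (hP : p.head? = some P) (hQ : p.getLast? = some Q)
    (hp : p.IsChain fun A B => #(A ∆ B) = 1) : #(P ∆ Q) + 1 ≤ p.length := by
  induction p generalizing P with
  | nil => simp at hP
  | cons a t ih =>
    obtain rfl : a = P := by simpa using hP
    cases t with
    | nil =>
      obtain rfl : a = Q := by simpa using hQ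
      simp
    | cons R t =>
      rw [List.getLast?_cons_cons] at hQ
      rw [List.isChain_cons_cons] at hp
      have := ih rfl hQ hp.2
      have := card_symmDiff_le_add a R Q
      simp only [List.length_cons] at *
      omega

namespace IsTightPath

variable {F : Finset (Finset α)} {P Q R : Finset α} {p q : List (Finset α)}

lemma reverse (h : IsTightPath F P Q p) : IsTightPath F Q P p.reverse := by
  obtain ⟨hP, hQ, hlen, hmem, hchain⟩ := h
  refine ⟨by rwa [List.head?_reverse], by rwa [List.getLast?_reverse], ?_,
    fun S hS => hmem S (List.mem_reverse.1 hS), ?_⟩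
  · rwa [List.length_reverse, symmDiff_comm]
  · exact List.isChain_reverse.2 (hchain.imp fun A B hAB => by rwa [symmDiff_comm])

lemma cons (hP : P ∈ F) (hPR : #(P ∆ R) = 1) (hdist : #(P ∆ Q) = #(R ∆ Q) + 1)
    (h : IsTightPath F R Q q) : IsTightPath F P Q (P :: q) := by
  obtain ⟨hR, hQ, hlen, hmem, hchain⟩ := h
  obtain ⟨t, rfl⟩ : ∃ t, q = R :: t := ⟨q.tail, by cases q <;> simp_all⟩
  refine ⟨rfl, by rwa [List.getLast?_cons_cons], by simp_all, ?_, ?_⟩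
  · exact List.forall_mem_cons.2 ⟨hP, hmem⟩
  · exact List.isChain_cons_cons.2 ⟨hPR, hchain⟩

lemma of_cons_cons {t : List (Finset α)} (h : IsTightPath F P Q (P :: R :: t)) :
    P ∈ F ∧ #(P ∆ R) = 1 ∧ #(P ∆ Q) = #(R ∆ Q) + 1 ∧ IsTightPath F R Q (R :: t) := by
  obtain ⟨-, hQ, hlen, hmem, hchain⟩ := h
  rw [List.getLast?_cons_cons] at hQ
  obtain ⟨hPR, hchain⟩ := List.isChain_cons_cons.1 hchain
  have hlower := card_symmDiff_add_one_le_length rfl hQ hchain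
  have htri := card_symmDiff_le_add P R Q
  simp only [List.length_cons] at hlen hlower
  refine ⟨hmem P (by simp), hPR, by omega, rfl, hQ, by simp; omega,
    fun S hS => hmem S (List.mem_cons_of_mem _ hS), hchain⟩

lemma append (hp : IsTightPath F P R p) (hq : IsTightPath F R Q q)
    (hdist : #(P ∆ Q) = #(P ∆ R) + #(R ∆ Q)) : IsTightPath F P Q (p ++ q.tail) := by
  induction p generalizing P with
  | nil => exact absurd hp.1 (by simp)
  | cons P' t ih =>
    obtain rfl : P = P' := by simpa using hp.1.symm
    cases t with
    | nil =>
      obtain rfl : R = P := by simpa using hp.2.1.symm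
      obtain ⟨t, rfl⟩ : ∃ t, q = R :: t := ⟨q.tail, by cases q <;> simp_all [IsTightPath]⟩
      exact hq
    | cons S t =>
      obtain ⟨hP, hPS, hdistPR, hS⟩ := of_cons_cons hp
      have := card_symmDiff_le_add S R Q
      have := card_symmDiff_le_add P S Q
      exact (ih hS (by omega)).cons hP hPS (by omega)

end IsTightPath

def HasTightPath (F : Finset (Finset α)) (P Q : Finset α) : Prop :=
  ∃ p, IsTightPath F P Q p

namespace HasTightPath

variable {F : Finset (Finset α)} {A K P Q R S : Finset α}

lemma refl (hP : P ∈ F) : HasTightPath F P P :=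
  ⟨[P], rfl, rfl, by simp, by simpa, List.isChain_singleton _⟩

lemma of_subset_of_subset (hPR : HasTightPath F P R) (hRS : HasTightPath F R S) (h₁ : P ⊆ R)
    (h₂ : R ⊆ S) : HasTightPath F P S :=
  let ⟨_, hp⟩ := hPR
  let ⟨_, hq⟩ := hRS
  ⟨_, hp.append hq (card_symmDiff_eq_add_of_subset h₁ h₂)⟩

lemma of_union (hP : HasTightPath F P (P ∪ Q)) (hQ : HasTightPath F Q (Q ∪ P)) :
    HasTightPath F P Q :=
  let ⟨_, hp⟩ := hP
  let ⟨_, hq⟩ := hQ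
  ⟨_, hp.append (union_comm Q P ▸ hq.reverse) (card_symmDiff_eq_add_union P Q)⟩

lemma union_left (hF : UnionClosed F) (hA : A ∈ F) (h : HasTightPath F K Q) :
    HasTightPath F (A ∪ K) (A ∪ Q) := by
  obtain ⟨p, hp⟩ := h
  induction p generalizing K with
  | nil => exact absurd hp.1 (by simp)
  | cons K' t ih =>
    obtain rfl : K = K' := by simpa using hp.1.symm
    cases t with
    | nil =>
      obtain rfl : Q = K := by simpa using hp.2.1.symm
      exact refl (hF.union_mem hA (hp.2.2.2.1 Q (by simp)))
    | cons R t =>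
      obtain ⟨hK, hKR, hdist, hR⟩ := hp.of_cons_cons
      obtain ⟨q, hq⟩ := ih hR
      obtain ⟨x, hx⟩ := card_eq_one.1 hKR
      obtain ⟨hxRQ, hKQ⟩ := symmDiff_eq_insert_of_card_symmDiff hx hdist
      by_cases hxA : x ∈ A
      · have : A ∪ K = A ∪ R := by
          rw [← symmDiff_eq_bot, symmDiff_union_union_left, hx]
          simpa
        exact this ▸ ⟨q, hq⟩
      · refine ⟨_, hq.cons (hF.union_mem hA hK) ?_ ?_⟩
        · rw [symmDiff_union_union_left, hx, sdiff_eq_self_of_disjoint (by simpa), card_singleton]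
        · rw [symmDiff_union_union_left, symmDiff_union_union_left, hKQ,
            insert_sdiff_of_notMem _ hxA, card_insert_of_notMem (by simp [hxRQ])]

end HasTightPath

section Base

variable {F B : Finset (Finset α)}

lemma exists_subset_of_mem_span {P : Finset α} (hP : P ∈ Span B) : ∃ K ∈ B, K ⊆ P := by
  obtain ⟨H, hHB, ⟨K, hK⟩, rfl⟩ := mem_span.1 hP
  exact ⟨K, hHB hK, le_sup (f := id) hK⟩

lemma hasTightPath_union_of_mem_base (hF : UnionClosed F) (hFB : F ⊆ Span B)
    (hpaths : ∀ K ∈ B, ∀ L ∈ B, K ≠ L → HasTightPath F K (K ∪ L)) {P L : Finset α}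
    (hP : P ∈ F) (hL : L ∈ B) : HasTightPath F P (P ∪ L) := by
  by_cases hLP : L ⊆ P
  · rw [union_eq_left.2 hLP]
    exact .refl hP
  obtain ⟨K, hK, hKP⟩ := exists_subset_of_mem_span (hFB hP)
  have := (hpaths K hK L hL (by rintro rfl; exact hLP hKP)).union_left hF hP
  rwa [← union_assoc, union_eq_left.2 hKP] at this

lemma hasTightPath_union_sup (hF : UnionClosed F) (hBF : B ⊆ F) (hFB : F ⊆ Span B)
    (hpaths : ∀ K ∈ B, ∀ L ∈ B, K ≠ L → HasTightPath F K (K ∪ L)) {H : Finset (Finset α)}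
    (hH : H ⊆ B) {P : Finset α} (hP : P ∈ F) : HasTightPath F P (P ∪ H.sup id) := by
  induction H using Finset.induction_on generalizing P with
  | empty => simpa using HasTightPath.refl hP
  | insert L H _ ih =>
    obtain ⟨hL, hH⟩ := insert_subset_iff.1 hH
    rw [sup_insert, id, sup_eq_union, ← union_assoc]
    exact (hasTightPath_union_of_mem_base hF hFB hpaths hP hL).of_subset_of_subset
      (ih hH (hF.union_mem hP (hBF hL))) subset_union_left subset_union_left

lemma hasTightPath_union (hF : UnionClosed F) (hBF : B ⊆ F) (hFB : F ⊆ Span B)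
    (hpaths : ∀ K ∈ B, ∀ L ∈ B, K ≠ L → HasTightPath F K (K ∪ L)) {P Q : Finset α}
    (hP : P ∈ F) (hQ : Q ∈ F) : HasTightPath F P (P ∪ Q) := by
  obtain ⟨H, hHB, -, rfl⟩ := mem_span.1 (hFB hQ)
  exact hasTightPath_union_sup hF hBF hFB hpaths hHB hP

end Base

/-- `F` is well-graded iff for any two distinct sets `K`, `L` of its base there is a
tight path in `F` from `K` to `K ∪ L`. -/
theorem wellGraded_iff_base_paths (F B : Finset (Finset α)) (hF : UnionClosed F)
    (hB : IsBase B F) :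
    WellGraded F ↔
      ∀ K ∈ B, ∀ L ∈ B, K ≠ L → ∃ p, IsTightPath F K (K ∪ L) p := by
  obtain ⟨hBF, hspan, -⟩ := hB
  constructor
  · intro hWG K hK L hL _
    by_cases hKL : K = K ∪ L
    · exact hKL ▸ HasTightPath.refl (hBF hK)
    · exact hWG K (hBF hK) _ (hF.union_mem (hBF hK) (hBF hL)) hKL
  · intro hpaths P hP Q hQ _
    exact (hasTightPath_union hF hBF hspan.ge hpaths hP hQ).of_union
      (hasTightPath_union hF hBF hspan.ge hpaths hQ hP)
end

section
/- The base of a ∪-closed well-graded family need not be well-graded: the family F = {∅, {a}, {b}, {c}, {a,b}, {a,c}, {b,c}, {c,d}, {a,b,c}, {a,c,d}, {b,c,d}, {a,b,c,d}, {a,b,c,d,e}} is ∪-closed and well-graded, its base is {∅, {a}, {b}, {c}, {c,d}, {a,b,c,d,e}}, and this base is not well-graded. -/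
open Finset

variable {α : Type*} [DecidableEq α]

/-!
Every property involved is invariant under renaming the ground set by an injection, so it
suffices to check the example on `Fin 5`, where it is decidable once ∪-closedness is reduced
to closure under binary unions and well-gradedness to the local condition `StepGraded`
(each member has a neighbour one step closer to any other member). The base is minimal because
none of its members is a union of the others, and it is not well-graded because its top member
`{a, b, c, d, e}` has no neighbour in it: every other member has at most two elements.
-/

lemma unionClosed_of_supClosed {F : Finset (Finset α)} (h : SupClosed (F : Set (Finset α))) :
    UnionClosed F :=
  fun _ hH hne => h.finsetSup_mem hne fun _ hX => mem_coe.2 (hH hX)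

section WellGraded

def StepGraded (F : Finset (Finset α)) : Prop :=
  ∀ P ∈ F, ∀ Q ∈ F, P ≠ Q →
    ∃ R ∈ F, #(symmDiff P R) = 1 ∧ #(symmDiff R Q) + 1 = #(symmDiff P Q)

instance (F : Finset (Finset α)) : Decidable (StepGraded F) := by
  unfold StepGraded; infer_instance

variable {F : Finset (Finset α)}

lemma card_symmDiff_triangle (X Y Z : Finset α) :
    #(symmDiff X Z) ≤ #(symmDiff X Y) + #(symmDiff Y Z) :=
  (card_le_card (symmDiff_triangle X Y Z)).trans (card_union_le _ _)

lemma card_symmDiff_le_length_of_isChain :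
    ∀ {X Y : Finset α} {l : List (Finset α)}, (X :: l).getLast? = some Y →
      (X :: l).IsChain (fun A B => #(symmDiff A B) = 1) → #(symmDiff X Y) ≤ l.length
  | X, Y, [], hlast, _ => by simp_all
  | X, Y, Z :: l, hlast, hchain => by
    rw [List.getLast?_cons_cons] at hlast
    rw [List.isChain_cons_cons] at hchain
    have hZY := card_symmDiff_le_length_of_isChain hlast hchain.2
    have := card_symmDiff_triangle X Z Y
    simp only [List.length_cons]
    omega

lemma isTightPath_singleton {P : Finset α} (hP : P ∈ F) : IsTightPath F P P [P] :=
  ⟨rfl, rfl, by simp, by simpa, List.isChain_singleton P⟩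

lemma IsTightPath.cons_s12 {P Q R : Finset α} {p : List (Finset α)} (hp : IsTightPath F R Q p)
    (hP : P ∈ F) (hPR : #(symmDiff P R) = 1) (hRQ : #(symmDiff R Q) + 1 = #(symmDiff P Q)) :
    IsTightPath F P Q (P :: p) := by
  obtain ⟨hhead, hlast, hlen, hmem, hchain⟩ := hp
  obtain ⟨t, rfl⟩ : ∃ t, p = R :: t := by
    rcases p with _ | ⟨X, t⟩ <;> simp_all
  refine ⟨rfl, by rwa [List.getLast?_cons_cons], ?_, List.forall_mem_cons.2 ⟨hP, hmem⟩,
    List.isChain_cons_cons.2 ⟨hPR, hchain⟩⟩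
  simp only [List.length_cons] at hlen ⊢
  omega

lemma StepGraded.wellGraded (h : StepGraded F) : WellGraded F := by
  suffices ∀ n, ∀ P ∈ F, ∀ Q ∈ F, #(symmDiff P Q) = n → ∃ p, IsTightPath F P Q p from
    fun P hP Q hQ _ => this _ P hP Q hQ rfl
  intro n
  induction n with
  | zero =>
    intro P hP Q _ hPQ
    obtain rfl : P = Q := symmDiff_eq_bot.1 (card_eq_zero.1 hPQ)
    exact ⟨[P], isTightPath_singleton hP⟩
  | succ n ih =>
    intro P hP Q hQ hPQ
    have hne : P ≠ Q := by rintro rfl; simp at hPQ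
    obtain ⟨R, hR, hPR, hRQ⟩ := h P hP Q hQ hne
    obtain ⟨p, hp⟩ := ih R hR Q hQ (by omega)
    exact ⟨P :: p, hp.cons_s12 hP hPR hRQ⟩

lemma WellGraded.stepGraded (h : WellGraded F) : StepGraded F := by
  intro P hP Q hQ hne
  obtain ⟨p, hhead, hlast, hlen, hmem, hchain⟩ := h P hP Q hQ hne
  rcases p with _ | ⟨X, _ | ⟨R, t⟩⟩
  · simp at hhead
  · simp_all
  obtain rfl : P = X := by simpa using hhead.symm
  rw [List.getLast?_cons_cons] at hlast
  have hchain' := List.isChain_cons_cons.1 hchain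
  have hRQ := card_symmDiff_le_length_of_isChain hlast hchain'.2
  have := card_symmDiff_triangle P R Q
  simp only [List.length_cons] at hlen
  exact ⟨R, hmem R (by simp), hchain'.1, by omega⟩

lemma wellGraded_iff_stepGraded : WellGraded F ↔ StepGraded F :=
  ⟨WellGraded.stepGraded, StepGraded.wellGraded⟩

end WellGraded

section Span

variable {G H : Finset (Finset α)}

lemma subset_span (G : Finset (Finset α)) : G ⊆ Span G := by
  intro X hX
  simp only [Span, mem_image, mem_filter, mem_powerset]
  exact ⟨{X}, ⟨singleton_subset_iff.2 hX, singleton_nonempty X⟩, by simp⟩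

lemma span_mono (h : G ⊆ H) : Span G ⊆ Span H := by
  intro X hX
  simp only [Span, mem_image, mem_filter, mem_powerset] at hX ⊢
  obtain ⟨K, ⟨hK, hne⟩, rfl⟩ := hX
  exact ⟨K, ⟨hK.trans h, hne⟩, rfl⟩

lemma isBase_span_of_forall_notMem_span_erase (h : ∀ X ∈ G, X ∉ Span (G.erase X)) :
    IsBase G (Span G) := by
  refine ⟨subset_span G, rfl, fun H hH hspan => hH.antisymm fun X hX => ?_⟩
  by_contra hXH
  exact h X hX <| span_mono (subset_erase.2 ⟨hH, hXH⟩) (hspan ▸ subset_span G hX)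

end Span

section Transport

variable {β : Type*} [DecidableEq β] (f : β ↪ α)

lemma card_symmDiff_map (P Q : Finset β) :
    #(symmDiff (P.map f) (Q.map f)) = #(symmDiff P Q) := by
  simp only [map_eq_image, ← image_symmDiff _ _ f.injective, card_image_of_injective _ f.injective]

lemma supClosed_image_map {G : Finset (Finset β)} (h : SupClosed (G : Set (Finset β))) :
    SupClosed ((G.image (map f) : Finset (Finset α)) : Set (Finset α)) := by
  rw [coe_image]
  exact h.image (⟨map f, map_union⟩ : SupHom (Finset β) (Finset α))

lemma stepGraded_image_map_iff {G : Finset (Finset β)} :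
    StepGraded (G.image (map f)) ↔ StepGraded G := by
  simp only [StepGraded, forall_mem_image, exists_mem_image, card_symmDiff_map,
    (map_injective f).ne_iff]

lemma span_image_map (G : Finset (Finset β)) :
    Span (G.image (map f)) = (Span G).image (map f) := by
  have sup_image (H : Finset (Finset β)) : (H.image (map f)).sup id = (H.sup id).map f := by
    rw [sup_image, apply_sup_eq_sup_comp (map f) (fun _ _ => map_union _ _) (map_empty f)]
    rfl
  ext X
  simp only [Span, mem_image, mem_filter, mem_powerset, subset_image_iff]
  constructor
  · rintro ⟨_, ⟨⟨H, hH, rfl⟩, hne⟩, rfl⟩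
    exact ⟨H.sup id, ⟨H, ⟨hH, hne.of_image⟩, rfl⟩, (sup_image H).symm⟩
  · rintro ⟨_, ⟨H, ⟨hH, hne⟩, rfl⟩, rfl⟩
    exact ⟨_, ⟨⟨H, hH, rfl⟩, hne.image _⟩, sup_image H⟩

lemma IsBase.image_map {B F : Finset (Finset β)} (h : IsBase B F) :
    IsBase (B.image (map f)) (F.image (map f)) := by
  obtain ⟨hsub, hspan, hmin⟩ := h
  refine ⟨image_subset_image hsub, by rw [span_image_map, hspan], fun H hH hHspan => ?_⟩
  obtain ⟨H, hHB, rfl⟩ := subset_image_iff.1 hH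
  rw [span_image_map] at hHspan
  rw [hmin H hHB (image_injective (map_injective f) hHspan)]

end Transport

section Example

set_option maxRecDepth 10000

def exampleFamily : Finset (Finset (Fin 5)) :=
  {∅, {0}, {1}, {2}, {0, 1}, {0, 2}, {1, 2}, {2, 3}, {0, 1, 2},
    {0, 2, 3}, {1, 2, 3}, {0, 1, 2, 3}, {0, 1, 2, 3, 4}}

def exampleBase : Finset (Finset (Fin 5)) := {∅, {0}, {1}, {2}, {2, 3}, {0, 1, 2, 3, 4}}

lemma supClosed_exampleFamily : SupClosed (exampleFamily : Set (Finset (Fin 5))) := by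
  simp only [SupClosed, mem_coe]
  decide

lemma stepGraded_exampleFamily : StepGraded exampleFamily := by decide

lemma isBase_exampleBase : IsBase exampleBase exampleFamily := by
  have hspan : Span exampleBase = exampleFamily := by decide
  exact hspan ▸ isBase_span_of_forall_notMem_span_erase (by decide)

lemma not_stepGraded_exampleBase : ¬ StepGraded exampleBase := by decide

end Example

/-- The base of a ∪-closed well-graded family need not be well-graded. -/
theorem base_of_wg_family_not_wg (a b c d e : α)
    (hab : a ≠ b) (hac : a ≠ c) (had : a ≠ d) (hae : a ≠ e)
    (hbc : b ≠ c) (hbd : b ≠ d) (hbe : b ≠ e)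
    (hcd : c ≠ d) (hce : c ≠ e) (hde : d ≠ e) :
    let F : Finset (Finset α) :=
      {∅, {a}, {b}, {c}, {a, b}, {a, c}, {b, c}, {c, d}, {a, b, c},
        {a, c, d}, {b, c, d}, {a, b, c, d}, {a, b, c, d, e}}
    let B : Finset (Finset α) := {∅, {a}, {b}, {c}, {c, d}, {a, b, c, d, e}}
    UnionClosed F ∧ WellGraded F ∧ IsBase B F ∧ ¬ WellGraded B := by
  intro F B
  let f : Fin 5 ↪ α := ⟨![a, b, c, d, e], by
    intro i j hij
    fin_cases i <;> fin_cases j <;> simp_all [eq_comm]⟩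
  have hF : F = exampleFamily.image (map f) := by
    simp only [exampleFamily, image_insert, image_singleton, map_insert, map_singleton, map_empty]
    rfl
  have hB : B = exampleBase.image (map f) := by
    simp only [exampleBase, image_insert, image_singleton, map_insert, map_singleton, map_empty]
    rfl
  rw [hF, hB, wellGraded_iff_stepGraded, wellGraded_iff_stepGraded, stepGraded_image_map_iff,
    stepGraded_image_map_iff]
  exact ⟨unionClosed_of_supClosed (supClosed_image_map f supClosed_exampleFamily),
    stepGraded_exampleFamily, isBase_exampleBase.image_map f, not_stepGraded_exampleBase⟩
end
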